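/- arXiv:1709.08321 — 8 statements merged into one kernel-verified Lean document; each statement's English description precedes it below -/
import Mathlib

section
/- Let n ≥ 1 be an integer, let R be a nonempty finite index set, and let C : R → ℝ. Define recursively C⁽⁰⁾ = C, S⁽⁰⁾ = Σ_{r∈R} C(r), and for i = 1,…,n−1: C⁽ⁱ⁾(r) = C(r)·(S⁽ⁱ⁻¹⁾ − (n−i)·C⁽ⁱ⁻¹⁾(r)) and S⁽ⁱ⁾ = Σ_{r∈R} C⁽ⁱ⁾(r). Then S⁽ⁿ⁻¹⁾ equals the sum over all injective n-tuples (r₁,…,rₙ) of elements of R of the product C(r₁)·C(r₂)⋯C(rₙ); equivalently, S⁽ⁿ⁻¹⁾ = n! · Σ_{T ⊆ R, |T| = n} ∏_{r∈T} C(r). -/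
open Finset

/-- Sum of products over `k`-element subsets of `s` (an "elementary symmetric" sum). -/
noncomputable def hypercubeEsum {R : Type*} [DecidableEq R] (C : R → ℝ)
    (s : Finset R) (k : ℕ) : ℝ :=
  ∑ T ∈ s.powersetCard k, ∏ r ∈ T, C r

lemma hypercubeEsum_zero {R : Type*} [DecidableEq R] (C : R → ℝ) (s : Finset R) :
    hypercubeEsum C s 0 = 1 := by
  simp [hypercubeEsum]

lemma hypercubeEsum_insert {R : Type*} [DecidableEq R] (C : R → ℝ) (s : Finset R)
    (x : R) (hx : x ∉ s) (k : ℕ) :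
    hypercubeEsum C (insert x s) (k + 1) =
      hypercubeEsum C s (k + 1) + C x * hypercubeEsum C s k := by
  unfold hypercubeEsum
  rw [Finset.powersetCard_succ_insert hx, Finset.sum_union, Finset.sum_image, Finset.mul_sum]
  · congr 1
    refine Finset.sum_congr rfl fun T hT => ?_
    have hxT : x ∉ T := fun h => hx ((Finset.mem_powersetCard.1 hT).1 h)
    rw [Finset.prod_insert hxT]
  · intro T hT T' hT' h
    have hxT : x ∉ T := fun h' => hx ((Finset.mem_powersetCard.1 hT).1 h')
    have hxT' : x ∉ T' := fun h' => hx ((Finset.mem_powersetCard.1 hT').1 h')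
    have := congrArg (fun S => Finset.erase S x) h
    simpa [Finset.erase_insert, hxT, hxT'] using this
  · rw [Finset.disjoint_right]
    intro T hT hT'
    obtain ⟨U, hU, rfl⟩ := Finset.mem_image.1 hT
    have : x ∈ (insert x U : Finset R) := Finset.mem_insert_self _ _
    exact hx ((Finset.mem_powersetCard.1 hT').1 this)

/-- Key counting identity: `∑_r C r · e_k(R∖{r}) = (k+1) · e_{k+1}(R)`. -/
lemma hypercubeEsum_sum_erase {R : Type*} [Fintype R] [DecidableEq R] (C : R → ℝ) (k : ℕ) :
    ∑ r : R, C r * hypercubeEsum C (Finset.univ.erase r) k =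
      ((k : ℝ) + 1) * hypercubeEsum C Finset.univ (k + 1) := by
  unfold hypercubeEsum
  have lhs_eq : ∑ r : R, C r * ∑ T ∈ (Finset.univ.erase r).powersetCard k, ∏ x ∈ T, C x
      = ∑ p ∈ (Finset.univ : Finset R).sigma
          (fun r => (Finset.univ.erase r).powersetCard k),
          ∏ x ∈ insert p.1 p.2, C x := by
    rw [Finset.sum_sigma]
    refine Finset.sum_congr rfl fun r _ => ?_
    rw [Finset.mul_sum]
    refine Finset.sum_congr rfl fun T hT => ?_
    have hrT : r ∉ T := fun h =>
      (Finset.mem_erase.1 ((Finset.mem_powersetCard.1 hT).1 h)).1 rfl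
    rw [Finset.prod_insert hrT]
  rw [lhs_eq]
  have rhs_eq : ∑ q ∈ (Finset.univ.powersetCard (k + 1)).sigma (fun S => S),
        ∏ x ∈ q.1, C x
      = ((k : ℝ) + 1) * ∑ T ∈ Finset.univ.powersetCard (k + 1), ∏ x ∈ T, C x := by
    rw [Finset.sum_sigma, Finset.mul_sum]
    refine Finset.sum_congr rfl fun S hS => ?_
    have hcard : S.card = k + 1 := (Finset.mem_powersetCard.1 hS).2
    have hc : ∑ _s ∈ S, ∏ x ∈ S, C x = ((k : ℝ) + 1) * ∏ x ∈ S, C x := by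
      rw [Finset.sum_const, nsmul_eq_mul, hcard]
      push_cast
      ring
    exact hc
  rw [← rhs_eq]
  refine Finset.sum_nbij' (fun p => ⟨insert p.1 p.2, p.1⟩) (fun q => ⟨q.2, q.1.erase q.2⟩)
    ?_ ?_ ?_ ?_ ?_
  · rintro ⟨r, T⟩ hp
    simp only [Finset.mem_sigma] at hp ⊢
    obtain ⟨-, hT⟩ := hp
    obtain ⟨hsub, hcard⟩ := Finset.mem_powersetCard.1 hT
    have hrT : r ∉ T := fun h => (Finset.mem_erase.1 (hsub h)).1 rfl
    refine ⟨Finset.mem_powersetCard.2 ⟨Finset.subset_univ _, ?_⟩, Finset.mem_insert_self _ _⟩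
    rw [Finset.card_insert_of_notMem hrT, hcard]
  · rintro ⟨S, r⟩ hq
    simp only [Finset.mem_sigma] at hq ⊢
    obtain ⟨hS, hr⟩ := hq
    obtain ⟨-, hcard⟩ := Finset.mem_powersetCard.1 hS
    refine ⟨Finset.mem_univ _, Finset.mem_powersetCard.2 ⟨?_, ?_⟩⟩
    · intro y hy
      exact Finset.mem_erase.2 ⟨(Finset.mem_erase.1 hy).1, Finset.mem_univ _⟩
    · rw [Finset.card_erase_of_mem hr, hcard]
      rfl
  · rintro ⟨r, T⟩ hp
    simp only [Finset.mem_sigma] at hp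
    obtain ⟨-, hT⟩ := hp
    have hrT : r ∉ T := fun h =>
      (Finset.mem_erase.1 ((Finset.mem_powersetCard.1 hT).1 h)).1 rfl
    simp [Finset.erase_insert hrT]
  · rintro ⟨S, r⟩ hq
    simp only [Finset.mem_sigma] at hq
    simp [Finset.insert_erase hq.2]
  · rintro ⟨r, T⟩ _
    rfl

lemma hypercubeEsum_erase {R : Type*} [Fintype R] [DecidableEq R] (C : R → ℝ)
    (r : R) (k : ℕ) :
    hypercubeEsum C (Finset.univ.erase r) (k + 1) =
      hypercubeEsum C Finset.univ (k + 1) - C r * hypercubeEsum C (Finset.univ.erase r) k := by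
  have h := hypercubeEsum_insert C (Finset.univ.erase r) r (Finset.notMem_erase r _) k
  rw [Finset.insert_erase (Finset.mem_univ r)] at h
  linarith

/-- Proposition 2.1 (closed form for the combinatorial hypercube summation):
the recursion `C⁽ⁱ⁾, S⁽ⁱ⁾` computes the sum over injective `n`-tuples of the
products `C(r₁)⋯C(rₙ)`, which equals `n!` times the sum over `n`-element subsets. -/
theorem hypercube_summation_recursion
    (n : ℕ) (hn : 1 ≤ n) (R : Type*) [Fintype R] [Nonempty R] [DecidableEq R]
    (C : R → ℝ) (Cs : ℕ → R → ℝ) (Ss : ℕ → ℝ)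
    (hC0 : ∀ r, Cs 0 r = C r)
    (hS : ∀ i, Ss i = ∑ r, Cs i r)
    (hCrec : ∀ i, 1 ≤ i → i ≤ n - 1 → ∀ r,
      Cs i r = C r * (Ss (i - 1) - ((n : ℝ) - (i : ℝ)) * Cs (i - 1) r)) :
    Ss (n - 1) = ∑ f : Fin n ↪ R, ∏ i, C (f i) ∧
    Ss (n - 1) = (n.factorial : ℝ) *
      ∑ T ∈ Finset.univ.powersetCard n, ∏ r ∈ T, C r := by
  -- The invariant: Ss (n-1) = ∑_r k! · e_k(R∖{r}) · Cs (n-1-k) r for all k ≤ n-1.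
  have key : ∀ k, k ≤ n - 1 →
      Ss (n - 1) = ∑ r, (k.factorial : ℝ) *
        hypercubeEsum C (Finset.univ.erase r) k * Cs (n - 1 - k) r := by
    intro k
    induction k with
    | zero =>
      intro _
      simp [hypercubeEsum_zero, hS (n - 1)]
    | succ k ih =>
      intro hk1
      have hk : k ≤ n - 1 := Nat.le_of_succ_le hk1
      rw [ih hk]
      set i := n - 1 - k with hi
      have hi1 : 1 ≤ i := by omega
      have hin : i ≤ n - 1 := by omega
      have hii : i - 1 = n - 1 - (k + 1) := by omega
      have hcast : (n : ℝ) - (i : ℝ) = (k : ℝ) + 1 := by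
        have h1 : i + (k + 1) = n := by omega
        have := congrArg (Nat.cast : ℕ → ℝ) h1
        push_cast at this
        linarith
      have expand : ∀ r : R,
          (k.factorial : ℝ) * hypercubeEsum C (Finset.univ.erase r) k * Cs i r
          = (k.factorial : ℝ) * (C r * hypercubeEsum C (Finset.univ.erase r) k) * Ss (i - 1)
            - ((k : ℝ) + 1) * (k.factorial : ℝ) *
              (C r * hypercubeEsum C (Finset.univ.erase r) k) * Cs (i - 1) r := by
        intro r
        rw [hCrec i hi1 hin r, hcast]
        ring
      calc ∑ r, (k.factorial : ℝ) * hypercubeEsum C (Finset.univ.erase r) k * Cs i r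
          = (∑ r, (k.factorial : ℝ) *
              (C r * hypercubeEsum C (Finset.univ.erase r) k)) * Ss (i - 1)
            - ((k : ℝ) + 1) * (k.factorial : ℝ) *
              ∑ r, (C r * hypercubeEsum C (Finset.univ.erase r) k) * Cs (i - 1) r := by
            rw [Finset.sum_congr rfl (fun r _ => expand r), Finset.sum_sub_distrib,
              Finset.sum_mul, Finset.mul_sum]
            congr 1
            refine Finset.sum_congr rfl fun r _ => ?_
            ring
        _ = ∑ r, ((k + 1).factorial : ℝ) *
              hypercubeEsum C (Finset.univ.erase r) (k + 1) * Cs (n - 1 - (k + 1)) r := by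
            rw [← Finset.mul_sum, hypercubeEsum_sum_erase C k, hS (i - 1), hii]
            rw [Finset.mul_sum, Finset.mul_sum, ← Finset.sum_sub_distrib]
            refine Finset.sum_congr rfl fun r _ => ?_
            rw [hypercubeEsum_erase C r k, Nat.factorial_succ]
            push_cast
            ring
  -- Evaluate the invariant at k = n - 1.
  have final : Ss (n - 1) = (n.factorial : ℝ) *
      ∑ T ∈ Finset.univ.powersetCard n, ∏ r ∈ T, C r := by
    have h := key (n - 1) le_rfl
    rw [Nat.sub_self] at h
    have hstep : ∑ r, ((n - 1).factorial : ℝ) *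
        hypercubeEsum C (Finset.univ.erase r) (n - 1) * Cs 0 r
        = ((n - 1).factorial : ℝ) *
          ∑ r, C r * hypercubeEsum C (Finset.univ.erase r) (n - 1) := by
      rw [Finset.mul_sum]
      refine Finset.sum_congr rfl fun r _ => ?_
      rw [hC0 r]
      ring
    rw [h, hstep, hypercubeEsum_sum_erase C (n - 1)]
    have hn1 : n - 1 + 1 = n := Nat.sub_add_cancel hn
    have hfac : ((n - 1).factorial : ℝ) * (((n - 1 : ℕ) : ℝ) + 1) = (n.factorial : ℝ) := by
      have h2 : (n - 1).factorial * (n - 1 + 1) = n.factorial := by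
        rw [mul_comm, ← Nat.factorial_succ, hn1]
      exact_mod_cast h2
    rw [hn1]
    unfold hypercubeEsum
    rw [← mul_assoc, hfac]
  refine ⟨?_, final⟩
  -- Sum over embeddings equals n! times the sum over n-element subsets.
  rw [final]
  have maps : ∀ f : Fin n ↪ R, f ∈ (Finset.univ : Finset (Fin n ↪ R)) →
      Finset.univ.map f ∈ Finset.univ.powersetCard n := by
    intro f _
    exact Finset.mem_powersetCard.2 ⟨Finset.subset_univ _, by simp⟩
  rw [← Finset.sum_fiberwise_of_maps_to maps (fun f => ∏ i, C (f i))]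
  rw [Finset.mul_sum]
  refine (Finset.sum_congr rfl fun T hT => ?_).symm
  have hTcard : T.card = n := (Finset.mem_powersetCard.1 hT).2
  have hval : ∀ f : Fin n ↪ R, Finset.univ.map f = T → (∏ i, C (f i)) = ∏ r ∈ T, C r := by
    intro f hf
    rw [← hf, Finset.prod_map]

  rw [Finset.sum_congr rfl (fun f hf => hval f (Finset.mem_filter.1 hf).2),
    Finset.sum_const, nsmul_eq_mul]
  congr 1
  -- Count embeddings with image T: there are n! of them.
  have hcount : (Finset.univ.filter
      fun f : Fin n ↪ R => Finset.univ.map f = T).card = n.factorial := by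
    have hsub : Fintype.card {f : Fin n ↪ R // Finset.univ.map f = T} = n.factorial := by
      have e : {f : Fin n ↪ R // Finset.univ.map f = T} ≃ (Fin n ↪ {x // x ∈ T}) := by
        refine Equiv.ofBijective
          (fun f => ⟨fun i => ⟨f.1 i, by
              have hm := Finset.mem_map_of_mem f.1 (Finset.mem_univ i)
              rwa [f.2] at hm⟩,
            fun a b h => f.1.injective (congrArg Subtype.val h)⟩) ⟨?_, ?_⟩
        · rintro ⟨f, hf⟩ ⟨g, hg⟩ h
          ext i
          exact congrArg Subtype.val (DFunLike.congr_fun h i)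
        · intro g
          have hmem : Finset.univ.map (g.trans (Function.Embedding.subtype _)) = T := by
            refine Finset.eq_of_subset_of_card_le ?_ ?_
            · intro x hx
              obtain ⟨i, -, rfl⟩ := Finset.mem_map.1 hx
              exact (g i).2
            · rw [hTcard, Finset.card_map, Finset.card_univ, Fintype.card_fin]
          refine ⟨⟨g.trans (Function.Embedding.subtype _), hmem⟩, ?_⟩
          ext i
          rfl
      rw [Fintype.card_congr e, Fintype.card_embedding_eq, Fintype.card_coe, hTcard,
        Fintype.card_fin, Nat.descFactorial_self]
    rw [← hsub, Fintype.card_subtype]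
  rw [hcount]
end

section
/- (Staggered fullband coefficients, factored form.) Let l ≥ 1 and n be integers with 0 ≤ n ≤ 2l−1, set N = 2l, and let b ∈ ℝ satisfy b + j ≠ 0 for every j ∈ {1,…,2l} (this holds in particular when b is a half-integer, e.g. b = −l + s − 1/2 for an integer shift s). Define, for k = 1,…,2l, c(k) = ((−1)^{n+1} · n! / λ(k)) · (∏_{j=1, j≠k}^{2l} (b+j)) · Σ_{R} ∏_{r∈R} 1/(b+r), where the sum ranges over all n-element subsets R of {1,…,2l}∖{k}. Then c solves the fullband finite-difference system of order n at offset b: Σ_{k=1}^{2l} (b+k)^p · c(k) = n!·δ_{p,n} for every integer 0 ≤ p ≤ 2l−1. -/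
open Finset Polynomial

/-- Theorem 2.2 (staggered fullband coefficients, factored form): the closed-form
coefficients solve the fullband finite-difference system of order `n` at offset `b`. -/
theorem staggered_fullband_coefficients_factored
    (l n : ℕ) (hl : 1 ≤ l) (hn : n ≤ 2 * l - 1) (b : ℝ)
    (hb : ∀ j ∈ Finset.Icc 1 (2 * l), b + (j : ℝ) ≠ 0)
    (lam : ℕ → ℝ)
    (hlam : ∀ k, lam k = ∏ j ∈ (Finset.Icc 1 (2 * l)).erase k, ((k : ℝ) - (j : ℝ)))
    (c : ℕ → ℝ)
    (hc : ∀ k ∈ Finset.Icc 1 (2 * l),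
      c k = ((-1 : ℝ) ^ (n + 1) * (n.factorial : ℝ) / lam k) *
        (∏ j ∈ (Finset.Icc 1 (2 * l)).erase k, (b + (j : ℝ))) *
        ∑ R ∈ ((Finset.Icc 1 (2 * l)).erase k).powersetCard n,
          ∏ r ∈ R, 1 / (b + (r : ℝ))) :
    ∀ p : ℕ, p ≤ 2 * l - 1 →
      ∑ k ∈ Finset.Icc 1 (2 * l), (b + (k : ℝ)) ^ p * c k =
        if p = n then (n.factorial : ℝ) else 0 := by
  intro p hp
  set s : Finset ℕ := Finset.Icc 1 (2 * l) with hs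
  have hcard : s.card = 2 * l := by simp [hs]
  set v : ℕ → ℝ := fun k => b + (k : ℝ) with hv
  have hinj : Set.InjOn v s := by
    intro x _ y _ hxy
    have : (x : ℝ) = y := by
      have := hxy
      simp only [hv] at this
      linarith
    exact_mod_cast this
  have hlpos : 0 < 2 * l := by omega
  -- Step 1: interpolation identity for X^p, coefficient n
  have hdeg : ((X : ℝ[X]) ^ p).degree < (s.card : ℕ) := by
    rw [degree_X_pow, hcard]
    exact_mod_cast (by omega : p < 2 * l)
  have key := Lagrange.eq_interpolate hinj hdeg
  have hco := congrArg (fun q : ℝ[X] => q.coeff n) key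
  simp only [Lagrange.interpolate_apply, finset_sum_coeff, coeff_C_mul, eval_pow, eval_X,
    coeff_X_pow] at hco
  -- Step 2: c k = n! * (basis s v k).coeff n
  have hck : ∀ k ∈ s, c k = (n.factorial : ℝ) * (Lagrange.basis s v k).coeff n := by
    intro k hk
    set t : Finset ℕ := s.erase k with ht
    have htcard : t.card = 2 * l - 1 := by
      rw [ht, Finset.card_erase_of_mem hk, hcard]
    set m : ℕ := 2 * l - 1 - n with hm
    have hmn : m + n = 2 * l - 1 := by omega
    -- basis coefficient
    have hbasis : Lagrange.basis s v k =
        C (∏ j ∈ t, (v k - v j)⁻¹) * ∏ j ∈ t, (X - C (v j)) := by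
      rw [Lagrange.basis, ← ht]
      rw [map_prod, ← Finset.prod_mul_distrib]
      rfl
    have hvieta : (∏ j ∈ t, (X - C (v j))).coeff n =
        (-1 : ℝ) ^ m * ∑ T ∈ t.powersetCard m, ∏ j ∈ T, v j := by
      have h1 : (∏ j ∈ t, (X - C (v j))) = ((t.val.map v).map fun x => X - C x).prod := by
        rw [Multiset.map_map]
        rfl
      have hcardm : Multiset.card (t.val.map v) = 2 * l - 1 := by
        rw [Multiset.card_map]; exact htcard
      rw [h1, Multiset.prod_X_sub_C_coeff _ (by rw [hcardm]; exact hn)]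
      rw [hcardm, Finset.esymm_map_val]
    -- complement bijection
    have hcompl : ∑ T ∈ t.powersetCard m, ∏ j ∈ T, v j =
        (∏ j ∈ t, v j) * ∑ R ∈ t.powersetCard n, ∏ r ∈ R, 1 / v r := by
      rw [Finset.mul_sum]
      refine Finset.sum_nbij' (fun T => t \ T) (fun R => t \ R) ?_ ?_ ?_ ?_ ?_
      · intro T hT
        rw [Finset.mem_powersetCard] at hT ⊢
        exact ⟨Finset.sdiff_subset, by rw [Finset.card_sdiff_of_subset hT.1, htcard, hT.2, hm]; omega⟩
      · intro R hR
        rw [Finset.mem_powersetCard] at hR ⊢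
        exact ⟨Finset.sdiff_subset, by rw [Finset.card_sdiff_of_subset hR.1, htcard, hR.2]⟩
      · intro T hT
        rw [Finset.mem_powersetCard] at hT
        exact _root_.sdiff_sdiff_eq_self hT.1
      · intro R hR
        rw [Finset.mem_powersetCard] at hR
        exact _root_.sdiff_sdiff_eq_self hR.1
      · intro T hT
        rw [Finset.mem_powersetCard] at hT
        have hsub : t \ T ⊆ t := Finset.sdiff_subset
        have hne : ∀ r ∈ t \ T, v r ≠ 0 := by
          intro r hr
          exact hb r (Finset.mem_of_mem_erase (hsub hr))
        have hprod : (∏ j ∈ t \ T, v j) * ∏ j ∈ T, v j = ∏ j ∈ t, v j :=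
          Finset.prod_sdiff hT.1
        have hTne : (∏ j ∈ T, v j) ≠ 0 := by
          refine Finset.prod_ne_zero_iff.mpr fun r hr => ?_
          exact hb r (Finset.mem_of_mem_erase (hT.1 hr))
        have : ∏ r ∈ t \ T, 1 / v r = (∏ r ∈ t \ T, v r)⁻¹ := by
          simp [one_div, ← Finset.prod_inv_distrib]
        rw [this]
        have hdne : (∏ r ∈ t \ T, v r) ≠ 0 := by
          refine Finset.prod_ne_zero_iff.mpr hne
        field_simp
        linarith [hprod]
    -- sign
    have hsign : (-1 : ℝ) ^ m = (-1 : ℝ) ^ (n + 1) := by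
      have h2 : m + (n + 1) = 2 * l := by omega
      have : (-1 : ℝ) ^ m * (-1 : ℝ) ^ (n + 1) = 1 := by
        rw [← pow_add, h2, pow_mul]
        norm_num
      have hsq : (-1 : ℝ) ^ (n + 1) * (-1 : ℝ) ^ (n + 1) = 1 := by
        rw [← pow_add, ← two_mul, pow_mul]
        norm_num
      calc (-1 : ℝ) ^ m = (-1 : ℝ) ^ m * ((-1 : ℝ) ^ (n + 1) * (-1 : ℝ) ^ (n + 1)) := by
            rw [hsq, mul_one]
        _ = ((-1 : ℝ) ^ m * (-1 : ℝ) ^ (n + 1)) * (-1 : ℝ) ^ (n + 1) := by ring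
        _ = (-1 : ℝ) ^ (n + 1) := by rw [this, one_mul]
    -- lam
    have hlamk : lam k = ∏ j ∈ t, (v k - v j) := by
      rw [hlam k]
      refine Finset.prod_congr rfl fun j _ => ?_
      simp [hv]
    have hlamne : lam k ≠ 0 := by
      rw [hlamk]
      refine Finset.prod_ne_zero_iff.mpr fun j hj => ?_
      have hjk : j ≠ k := Finset.ne_of_mem_erase hj
      have : v j ≠ v k := fun h => hjk (hinj (Finset.mem_of_mem_erase hj) hk h)
      intro h
      exact this (sub_eq_zero.mp h).symm
    have hinv : ∏ j ∈ t, (v k - v j)⁻¹ = (lam k)⁻¹ := by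
      rw [hlamk, Finset.prod_inv_distrib]
    rw [hc k hk, hbasis, coeff_C_mul, hvieta, hcompl, hinv, hsign]
    field_simp
    ring
  -- Step 3: combine
  calc ∑ k ∈ s, (b + (k : ℝ)) ^ p * c k
      = ∑ k ∈ s, v k ^ p * ((n.factorial : ℝ) * (Lagrange.basis s v k).coeff n) := by
        refine Finset.sum_congr rfl fun k hk => ?_
        rw [hck k hk]
    _ = (n.factorial : ℝ) * ∑ k ∈ s, v k ^ p * (Lagrange.basis s v k).coeff n := by
        rw [Finset.mul_sum]; refine Finset.sum_congr rfl fun k _ => by ring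
    _ = (n.factorial : ℝ) * (if n = p then 1 else 0) := by rw [← hco]
    _ = if p = n then (n.factorial : ℝ) else 0 := by
        by_cases h : p = n
        · subst h; simp
        · rw [if_neg (fun hh => h hh.symm), if_neg h, mul_zero]
end

section
/- (Staggered fullband coefficients, unfactored form.) Let l ≥ 1 and n be integers with 0 ≤ n ≤ 2l−1, set N = 2l, and let b ∈ ℝ be arbitrary. Define, for k = 1,…,2l, c(k) = ((−1)^{n+1} · n! / λ(k)) · Σ_{R} ∏_{r∈R} (b+r), where the sum ranges over all (2l−n−1)-element subsets R of {1,…,2l}∖{k}. Then Σ_{k=1}^{2l} (b+k)^p · c(k) = n!·δ_{p,n} for every integer 0 ≤ p ≤ 2l−1. -/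
open Finset Polynomial

theorem staggered_aux_basis_coeff
    (l n : ℕ) (hl : 1 ≤ l) (hn : n ≤ 2 * l - 1) (b : ℝ)
    (k : ℕ) (hk : k ∈ Finset.Icc 1 (2 * l)) :
    (Lagrange.basis (Finset.Icc 1 (2 * l)) (fun j : ℕ => b + (j : ℝ)) k).coeff n =
      ((-1 : ℝ) ^ (n + 1) *
        (∏ j ∈ (Finset.Icc 1 (2 * l)).erase k, ((k : ℝ) - (j : ℝ)))⁻¹) *
        ∑ R ∈ ((Finset.Icc 1 (2 * l)).erase k).powersetCard (2 * l - n - 1),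
          ∏ r ∈ R, (b + (r : ℝ)) := by
  set t := (Finset.Icc 1 (2 * l)).erase k with ht
  have htcard : t.card = 2 * l - 1 := by
    rw [ht, Finset.card_erase_of_mem hk, Nat.card_Icc]; omega
  have hbasis : Lagrange.basis (Finset.Icc 1 (2 * l)) (fun j : ℕ => b + (j : ℝ)) k =
      Polynomial.C (∏ j ∈ t, ((b + (k : ℝ)) - (b + (j : ℝ)))⁻¹) *
        ∏ j ∈ t, (Polynomial.X - Polynomial.C (b + (j : ℝ))) := by
    rw [Lagrange.basis]
    simp_rw [Lagrange.basisDivisor, ← ht]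
    rw [Finset.prod_mul_distrib, map_prod]
  have hprodcoeff : (∏ j ∈ t, (Polynomial.X - Polynomial.C (b + (j : ℝ)))).coeff n =
      (-1 : ℝ) ^ (2 * l - 1 - n) *
        ∑ R ∈ t.powersetCard (2 * l - 1 - n), ∏ r ∈ R, (b + (r : ℝ)) := by
    have hmap : (∏ j ∈ t, (Polynomial.X - Polynomial.C (b + (j : ℝ)))) =
        ((t.val.map (fun j : ℕ => b + (j : ℝ))).map
          (fun x : ℝ => Polynomial.X - Polynomial.C x)).prod := by
      rw [Multiset.map_map]
      rfl
    have hle : n ≤ Multiset.card (t.val.map (fun j : ℕ => b + (j : ℝ))) := by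
      rw [Multiset.card_map]
      show n ≤ t.card
      omega
    rw [hmap, Multiset.prod_X_sub_C_coeff _ hle]
    rw [Multiset.card_map]
    show _ = (-1 : ℝ) ^ (2 * l - 1 - n) * _
    have hc : (t.card : ℕ) - n = 2 * l - 1 - n := by omega
    rw [show Multiset.card t.val = t.card from rfl, hc, Finset.esymm_map_val]
  have hsign : ((-1 : ℝ)) ^ (2 * l - 1 - n) = (-1 : ℝ) ^ (n + 1) := by
    rw [neg_one_pow_eq_pow_mod_two, neg_one_pow_eq_pow_mod_two (n := n + 1)]
    congr 1
    omega
  have hinv : (∏ j ∈ t, ((b + (k : ℝ)) - (b + (j : ℝ)))⁻¹) =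
      (∏ j ∈ t, ((k : ℝ) - (j : ℝ)))⁻¹ := by
    rw [← Finset.prod_inv_distrib]
    apply Finset.prod_congr rfl
    intro j _
    ring_nf
  have hidx : 2 * l - 1 - n = 2 * l - n - 1 := by omega
  rw [hbasis, Polynomial.coeff_C_mul, hprodcoeff, hsign, hinv, hidx]
  ring

/-- Staggered fullband coefficients, unfactored form (equation (2.24) of the paper):
`c(k) = ((−1)^{n+1} n! / λ(k)) · Σ_{R} ∏_{r∈R} (b+r)` over `(2l−n−1)`-element subsets
`R` of `{1,…,2l}∖{k}` solves the fullband finite-difference system of order `n`. -/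
theorem staggered_fullband_coefficients_unfactored
    (l n : ℕ) (hl : 1 ≤ l) (hn : n ≤ 2 * l - 1) (b : ℝ)
    (lam : ℕ → ℝ)
    (hlam : ∀ k, lam k = ∏ j ∈ (Finset.Icc 1 (2 * l)).erase k, ((k : ℝ) - (j : ℝ)))
    (c : ℕ → ℝ)
    (hc : ∀ k ∈ Finset.Icc 1 (2 * l),
      c k = ((-1 : ℝ) ^ (n + 1) * (n.factorial : ℝ) / lam k) *
        ∑ R ∈ ((Finset.Icc 1 (2 * l)).erase k).powersetCard (2 * l - n - 1),
          ∏ r ∈ R, (b + (r : ℝ))) :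
    ∀ p : ℕ, p ≤ 2 * l - 1 →
      ∑ k ∈ Finset.Icc 1 (2 * l), (b + (k : ℝ)) ^ p * c k =
        if p = n then (n.factorial : ℝ) else 0 := by
  intro p hp
  set s := Finset.Icc 1 (2 * l) with hs
  set v : ℕ → ℝ := fun j => b + (j : ℝ) with hv
  have hvinj : Set.InjOn v s := by
    intro x _ y _ hxy
    have : (x : ℝ) = (y : ℝ) := by
      simpa [hv] using hxy
    exact_mod_cast this
  have hscard : s.card = 2 * l := by rw [hs, Nat.card_Icc]; omega
  have hXp : (Polynomial.X ^ p : ℝ[X]) =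
      Lagrange.interpolate s v (fun k => (b + (k : ℝ)) ^ p) := by
    apply Lagrange.eq_interpolate_of_eval_eq _ hvinj
    · rw [Polynomial.degree_X_pow, hscard]
      exact_mod_cast (by omega : p < 2 * l)
    · intro i _
      simp [hv]
  have hcoeff := congrArg (fun q : ℝ[X] => q.coeff n) hXp
  simp only [Lagrange.interpolate_apply, Polynomial.finset_sum_coeff,
    Polynomial.coeff_C_mul, Polynomial.coeff_X_pow] at hcoeff
  have hck : ∀ k ∈ s, c k = (n.factorial : ℝ) * (Lagrange.basis s v k).coeff n := by
    intro k hk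
    rw [hc k hk, staggered_aux_basis_coeff l n hl hn b k hk, hlam k]
    ring
  calc ∑ k ∈ s, (b + (k : ℝ)) ^ p * c k
      = ∑ k ∈ s, (n.factorial : ℝ) * ((b + (k : ℝ)) ^ p * (Lagrange.basis s v k).coeff n) := by
        apply Finset.sum_congr rfl
        intro k hk
        rw [hck k hk]
        ring
    _ = (n.factorial : ℝ) * ∑ k ∈ s, (b + (k : ℝ)) ^ p * (Lagrange.basis s v k).coeff n := by
        rw [Finset.mul_sum]
    _ = (n.factorial : ℝ) * (if n = p then 1 else 0) := by rw [← hcoeff]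
    _ = if p = n then (n.factorial : ℝ) else 0 := by
        by_cases h : p = n
        · simp [h]
        · rw [if_neg h, if_neg (fun hq => h hq.symm), mul_zero]
end

section
/- (Centralized fullband coefficients, unfactored form.) Let l ≥ 1 and n be integers with 0 ≤ n ≤ 2l, set N = 2l+1, and let a ∈ ℝ be arbitrary. Define, for k = 1,…,2l+1, c(k) = ((−1)^{n} · n! / λ(k)) · Σ_{R} ∏_{r∈R} (a+r), where the sum ranges over all (2l−n)-element subsets R of {1,…,2l+1}∖{k}. Then c solves the fullband finite-difference system of order n at offset a: Σ_{k=1}^{2l+1} (a+k)^p · c(k) = n!·δ_{p,n} for every integer 0 ≤ p ≤ 2l. -/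
open Finset Polynomial

/-- Centralized fullband coefficients, unfactored form (equation (2.26) of the paper):
`c(k) = ((−1)^n n! / λ(k)) · Σ_{R} ∏_{r∈R} (a+r)` over `(2l−n)`-element subsets `R`
of `{1,…,2l+1}∖{k}` solves the fullband finite-difference system of order `n`. -/
theorem centralized_fullband_coefficients_unfactored
    (l n : ℕ) (hl : 1 ≤ l) (hn : n ≤ 2 * l) (a : ℝ)
    (lam : ℕ → ℝ)
    (hlam : ∀ k, lam k = ∏ j ∈ (Finset.Icc 1 (2 * l + 1)).erase k, ((k : ℝ) - (j : ℝ)))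
    (c : ℕ → ℝ)
    (hc : ∀ k ∈ Finset.Icc 1 (2 * l + 1),
      c k = ((-1 : ℝ) ^ n * (n.factorial : ℝ) / lam k) *
        ∑ R ∈ ((Finset.Icc 1 (2 * l + 1)).erase k).powersetCard (2 * l - n),
          ∏ r ∈ R, (a + (r : ℝ))) :
    ∀ p : ℕ, p ≤ 2 * l →
      ∑ k ∈ Finset.Icc 1 (2 * l + 1), (a + (k : ℝ)) ^ p * c k =
        if p = n then (n.factorial : ℝ) else 0 := by
  intro p hp
  set S : Finset ℕ := Finset.Icc 1 (2 * l + 1) with hS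
  set v : ℕ → ℝ := fun j => a + (j : ℝ) with hv
  have hinj : Set.InjOn v S := by
    intro i _ j _ h
    have : (i : ℝ) = (j : ℝ) := by
      simpa [hv] using h
    exact_mod_cast this
  have hcard : S.card = 2 * l + 1 := by simp [hS]
  have hec : ∀ k ∈ S, (S.erase k).card = 2 * l := by
    intro k hk
    rw [card_erase_of_mem hk, hcard]
    omega
  -- sign identity
  have hsign : ((-1 : ℝ)) ^ (2 * l - n) = (-1 : ℝ) ^ n := by
    have h1 : ((-1 : ℝ)) ^ (2 * l - n) * (-1 : ℝ) ^ n = 1 := by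
      rw [← pow_add, Nat.sub_add_cancel hn, pow_mul]
      norm_num
    have h2 : ((-1 : ℝ)) ^ n * (-1 : ℝ) ^ n = 1 := by
      rw [← pow_add, ← two_mul, pow_mul]
      norm_num
    exact mul_right_cancel₀ (pow_ne_zero n (by norm_num : (-1 : ℝ) ≠ 0)) (h1.trans h2.symm)
  -- coefficient of the Lagrange basis polynomial
  have hbasis : ∀ k ∈ S, (Lagrange.basis S v k).coeff n =
      (lam k)⁻¹ * ((-1 : ℝ) ^ n *
        ∑ R ∈ (S.erase k).powersetCard (2 * l - n), ∏ r ∈ R, (a + (r : ℝ))) := by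
    intro k hk
    have hsplit : Lagrange.basis S v k =
        C (∏ j ∈ S.erase k, (v k - v j)⁻¹) * ∏ j ∈ S.erase k, (X - C (v j)) := by
      rw [Lagrange.basis]
      simp_rw [Lagrange.basisDivisor]
      rw [prod_mul_distrib, ← map_prod]
    have hXC : ∀ j : ℕ, (X - C (v j) : ℝ[X]) = X + C (-(a + (j : ℝ))) := by
      intro j; rw [map_neg, sub_eq_add_neg]
    have hle : n ≤ (S.erase k).card := by rw [hec k hk]; exact hn
    have hcoeff : (∏ j ∈ S.erase k, (X - C (v j)) : ℝ[X]).coeff n =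
        (-1 : ℝ) ^ (2 * l - n) *
          ∑ R ∈ (S.erase k).powersetCard (2 * l - n), ∏ r ∈ R, (a + (r : ℝ)) := by
      simp_rw [hXC]
      rw [Finset.prod_X_add_C_coeff _ _ hle, hec k hk, mul_sum]
      refine sum_congr rfl fun R hR => ?_
      have hRcard : R.card = 2 * l - n := (mem_powersetCard.mp hR).2
      rw [← hRcard, ← prod_const (-1 : ℝ), ← prod_mul_distrib]
      exact prod_congr rfl fun r _ => (neg_one_mul _).symm
    have hprodinv : (∏ j ∈ S.erase k, (v k - v j)⁻¹) = (lam k)⁻¹ := by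
      rw [hlam k, ← prod_inv_distrib]
      refine prod_congr rfl fun j _ => ?_
      simp [hv]
    rw [hsplit, coeff_C_mul, hcoeff, hprodinv, hsign]
  -- c k = n! * coeff n of basis
  have hck : ∀ k ∈ S, c k = (n.factorial : ℝ) * (Lagrange.basis S v k).coeff n := by
    intro k hk
    rw [hc k hk, hbasis k hk]
    ring
  -- interpolation identity
  have hdeg : (X ^ p : ℝ[X]).degree < S.card := by
    rw [degree_X_pow, hcard]
    exact_mod_cast Nat.lt_succ_of_le hp
  have hkey := Lagrange.eq_interpolate hinj hdeg
  have hkey2 := congrArg (fun q : ℝ[X] => q.coeff n) hkey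
  simp only [Lagrange.interpolate_apply, finset_sum_coeff, coeff_C_mul, coeff_X_pow,
    eval_pow, eval_X] at hkey2
  have hsum : (if n = p then (1 : ℝ) else 0) =
      ∑ k ∈ S, (a + (k : ℝ)) ^ p * (Lagrange.basis S v k).coeff n := by
    simpa [hv] using hkey2
  calc ∑ k ∈ S, (a + (k : ℝ)) ^ p * c k
      = ∑ k ∈ S, (n.factorial : ℝ) * ((a + (k : ℝ)) ^ p * (Lagrange.basis S v k).coeff n) := by
        refine sum_congr rfl fun k hk => ?_
        rw [hck k hk]; ring
    _ = (n.factorial : ℝ) * ∑ k ∈ S, (a + (k : ℝ)) ^ p * (Lagrange.basis S v k).coeff n := by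
        rw [mul_sum]
    _ = (n.factorial : ℝ) * (if n = p then (1 : ℝ) else 0) := by rw [← hsum]
    _ = if p = n then (n.factorial : ℝ) else 0 := by
        by_cases h : p = n
        · simp [h]
        · simp [h, Ne.symm h]
end

section
/- (Centralized fullband coefficients, factored form of Theorem 3.3.) Let l ≥ 1 and n ≥ 1 be integers with n ≤ 2l, set N = 2l+1, and let a be an integer such that −a ∈ {1,…,2l+1} (so a + (−a) = 0 and a + j ≠ 0 for every j ≠ −a). Define, for every k ∈ {1,…,2l+1} with k ≠ −a, c(k) = ((−1)^{n} · n! / λ(k)) · (∏_{j=1, j≠k, j≠−a}^{2l+1} (a+j)) · Σ_{R} ∏_{r∈R} 1/(a+r), where the sum ranges over all (n−1)-element subsets R of {1,…,2l+1}∖{k,−a}; and set c(−a) = −Σ_{k≠−a} c(k). Then Σ_{k=1}^{2l+1} (a+k)^p · c(k) = n!·δ_{p,n} for every integer 0 ≤ p ≤ 2l. -/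
open Finset Polynomial



/-- Lagrange dual identity: coefficients of Lagrange basis polynomials reproduce
Kronecker deltas against powers of the nodes. -/
lemma lag_dual {s : Finset ℕ} {v : ℕ → ℝ} (hvs : Set.InjOn v s)
    (q t : ℕ) (hq : q < s.card) :
    ∑ k ∈ s, v k ^ q * (Lagrange.basis s v k).coeff t = ((X : ℝ[X]) ^ q).coeff t := by
  have hdeg : ((X : ℝ[X]) ^ q).degree < s.card := by
    rw [degree_X_pow]; exact_mod_cast hq
  have h := Lagrange.eq_interpolate hvs hdeg
  conv_rhs => rw [h]
  rw [Lagrange.interpolate_apply, finset_sum_coeff]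
  refine Finset.sum_congr rfl fun k hk => ?_
  rw [coeff_C_mul, eval_pow, eval_X]

lemma basis_coeff {s : Finset ℕ} (v : ℕ → ℝ) (k : ℕ) (t : ℕ) :
    (Lagrange.basis s v k).coeff t =
      (∏ j ∈ s.erase k, (v k - v j))⁻¹ *
        (∏ j ∈ s.erase k, ((X : ℝ[X]) - C (v j))).coeff t := by
  rw [Lagrange.basis]
  simp_rw [Lagrange.basisDivisor]
  rw [Finset.prod_mul_distrib, ← map_prod, coeff_C_mul, ← Finset.prod_inv_distrib]

lemma vieta_finset (s : Finset ℕ) (f : ℕ → ℝ) (t : ℕ) (ht : t ≤ s.card) :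
    (∏ j ∈ s, ((X : ℝ[X]) - C (f j))).coeff t =
      (-1) ^ (s.card - t) * ∑ R ∈ s.powersetCard (s.card - t), ∏ r ∈ R, f r := by
  have h1 : (∏ j ∈ s, ((X : ℝ[X]) - C (f j))) =
      ((s.val.map f).map fun x => X - C x).prod := by
    rw [Multiset.map_map]; rfl
  have hcard : Multiset.card (s.val.map f) = s.card := by simp
  rw [h1, Multiset.prod_X_sub_C_coeff _ (by rw [hcard]; exact ht), hcard,
    Finset.esymm_map_val]

lemma complement_sum (U : Finset ℕ) (f : ℕ → ℝ) (hf : ∀ j ∈ U, f j ≠ 0)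
    (d : ℕ) (hd : d ≤ U.card) :
    (∏ j ∈ U, f j) * ∑ R ∈ U.powersetCard d, ∏ r ∈ R, (f r)⁻¹ =
      ∑ R ∈ U.powersetCard (U.card - d), ∏ r ∈ R, f r := by
  rw [Finset.mul_sum]
  refine Finset.sum_nbij' (fun R => U \ R) (fun R => U \ R) ?_ ?_ ?_ ?_ ?_
  · intro R hR
    rw [Finset.mem_powersetCard] at hR ⊢
    exact ⟨Finset.sdiff_subset, by rw [Finset.card_sdiff_of_subset hR.1, hR.2]⟩
  · intro R hR
    rw [Finset.mem_powersetCard] at hR ⊢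
    refine ⟨Finset.sdiff_subset, ?_⟩
    rw [Finset.card_sdiff_of_subset hR.1, hR.2]
    omega
  · intro R hR
    rw [Finset.mem_powersetCard] at hR
    show U \ (U \ R) = R
    rw [Finset.sdiff_sdiff_self_left, Finset.inter_eq_right.mpr hR.1]
  · intro R hR
    rw [Finset.mem_powersetCard] at hR
    show U \ (U \ R) = R
    rw [Finset.sdiff_sdiff_self_left, Finset.inter_eq_right.mpr hR.1]
  · intro R hR
    rw [Finset.mem_powersetCard] at hR
    show (∏ j ∈ U, f j) * ∏ r ∈ R, (f r)⁻¹ = ∏ r ∈ U \ R, f r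
    rw [← Finset.prod_sdiff hR.1]
    have h1 : (∏ r ∈ R, (f r)⁻¹) * ∏ x ∈ R, f x = 1 := by
      rw [← Finset.prod_mul_distrib]
      exact Finset.prod_eq_one fun r hr => inv_mul_cancel₀ (hf r (hR.1 hr))
    calc (∏ x ∈ U \ R, f x) * (∏ x ∈ R, f x) * ∏ r ∈ R, (f r)⁻¹
        = (∏ x ∈ U \ R, f x) * ((∏ r ∈ R, (f r)⁻¹) * ∏ x ∈ R, f x) := by ring
      _ = ∏ r ∈ U \ R, f r := by rw [h1, mul_one]



/-- Theorem 2.3 (centralized fullband coefficients, factored form): with the node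
`−a ∈ {1,…,2l+1}` treated separately via `c(−a) = −Σ_{k≠−a} c(k)`, the closed-form
coefficients solve the fullband finite-difference system of order `n` at offset `a`. -/
theorem centralized_fullband_coefficients_factored
    (l n : ℕ) (hl : 1 ≤ l) (hn1 : 1 ≤ n) (hn : n ≤ 2 * l)
    (a : ℤ) (ha : -a ∈ Finset.Icc (1 : ℤ) (2 * (l : ℤ) + 1))
    (m : ℕ) (hm : (m : ℤ) = -a)
    (lam : ℕ → ℝ)
    (hlam : ∀ k, lam k = ∏ j ∈ (Finset.Icc 1 (2 * l + 1)).erase k, ((k : ℝ) - (j : ℝ)))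
    (c : ℕ → ℝ)
    (hck : ∀ k ∈ (Finset.Icc 1 (2 * l + 1)).erase m,
      c k = ((-1 : ℝ) ^ n * (n.factorial : ℝ) / lam k) *
        (∏ j ∈ ((Finset.Icc 1 (2 * l + 1)).erase k).erase m, ((a : ℝ) + (j : ℝ))) *
        ∑ R ∈ (((Finset.Icc 1 (2 * l + 1)).erase k).erase m).powersetCard (n - 1),
          ∏ r ∈ R, 1 / ((a : ℝ) + (r : ℝ)))
    (hcm : c m = -∑ k ∈ (Finset.Icc 1 (2 * l + 1)).erase m, c k) :
    ∀ p : ℕ, p ≤ 2 * l →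
      ∑ k ∈ Finset.Icc 1 (2 * l + 1), ((a : ℝ) + (k : ℝ)) ^ p * c k =
        if p = n then (n.factorial : ℝ) else 0 := by
  set S := Finset.Icc 1 (2 * l + 1) with hSdef
  set v : ℕ → ℝ := fun k => (a : ℝ) + (k : ℝ) with hvdef
  have haR : (a : ℝ) = -(m : ℝ) := by
    have : (a : ℝ) = ((a : ℤ) : ℝ) := rfl
    rw [this, show (a : ℤ) = -(m : ℤ) by omega]
    push_cast; ring
  rw [Finset.mem_Icc] at ha
  have hmS : m ∈ S := by
    rw [hSdef, Finset.mem_Icc]; omega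
  have hcardS : S.card = 2 * l + 1 := by
    rw [hSdef, Nat.card_Icc]; omega
  set T := S.erase m with hTdef
  have hcardT : T.card = 2 * l := by
    rw [hTdef, Finset.card_erase_of_mem hmS, hcardS]
    omega
  have hvinj : ∀ {x y : ℕ}, v x = v y → x = y := by
    intro x y h
    simp only [hvdef] at h
    exact_mod_cast add_left_cancel h
  have hvinjT : Set.InjOn v T := fun x _ y _ h => hvinj h
  have hvm : v m = 0 := by simp [hvdef, haR]
  have hvne : ∀ j : ℕ, j ≠ m → v j ≠ 0 := by
    intro j hj h
    exact hj (hvinj (h.trans hvm.symm))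
  -- key identity
  have hkey : ∀ k ∈ T, v k * c k =
      (n.factorial : ℝ) * (Lagrange.basis T v k).coeff (n - 1) := by
    intro k hk
    obtain ⟨hkm, hkS⟩ := Finset.mem_erase.mp hk
    have hUeq : T.erase k = (S.erase k).erase m := by
      rw [hTdef, Finset.erase_right_comm]
    set U := (S.erase k).erase m with hUdef
    have hcardU : U.card = 2 * l - 1 := by
      rw [← hUeq, Finset.card_erase_of_mem hk, hcardT]
    have hkU : ∀ j ∈ U, j ≠ k := by
      intro j hj
      rw [← hUeq] at hj
      exact (Finset.mem_erase.mp hj).1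
    have hmU : ∀ j ∈ U, j ≠ m := by
      intro j hj
      exact (Finset.mem_erase.mp hj).1
    set Q := ∏ j ∈ U, ((k : ℝ) - (j : ℝ)) with hQdef
    have hQne : Q ≠ 0 := by
      rw [hQdef]
      refine Finset.prod_ne_zero_iff.mpr fun j hj => sub_ne_zero.mpr fun h => ?_
      exact hkU j hj (Nat.cast_injective h).symm
    have hkmR : (k : ℝ) - (m : ℝ) ≠ 0 := by
      refine sub_ne_zero.mpr ?_
      exact_mod_cast hkm
    have hmSk : m ∈ S.erase k := Finset.mem_erase.mpr ⟨fun h => hkm h.symm, hmS⟩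
    have hlamk : lam k = ((k : ℝ) - (m : ℝ)) * Q := by
      rw [hlam k, ← Finset.mul_prod_erase _ _ hmSk, hQdef, hUdef]
    have hvk : v k = (k : ℝ) - (m : ℝ) := by
      simp [hvdef, haR]; ring
    -- product-sum identity
    have hPE : (∏ j ∈ U, v j) *
        (∑ R ∈ U.powersetCard (n - 1), ∏ r ∈ R, (v r)⁻¹) =
        ∑ R ∈ U.powersetCard (2 * l - n), ∏ r ∈ R, v r := by
      have h := complement_sum U v (fun j hj => hvne j (hmU j hj)) (n - 1)
        (show n - 1 ≤ U.card by rw [hcardU]; omega)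
      have he : U.card - (n - 1) = 2 * l - n := by rw [hcardU]; omega
      rw [he] at h
      exact h
    -- coefficient of the basis polynomial
    have hQ' : ∏ j ∈ T.erase k, (v k - v j) = Q := by
      rw [hUeq, hQdef]
      refine Finset.prod_congr rfl fun j hj => ?_
      simp [hvdef]
    have hcoeff : (Lagrange.basis T v k).coeff (n - 1) =
        Q⁻¹ * ((-1) ^ (2 * l - n) *
          ∑ R ∈ U.powersetCard (2 * l - n), ∏ r ∈ R, v r) := by
      rw [basis_coeff, hQ', hUeq]
      congr 1
      have hv := vieta_finset U v (n - 1) (show n - 1 ≤ U.card by rw [hcardU]; omega)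
      have he : U.card - (n - 1) = 2 * l - n := by rw [hcardU]; omega
      rw [he] at hv
      exact hv
    have hsign : ((-1 : ℝ)) ^ (2 * l - n) = (-1) ^ n := by
      have h1 : ((-1 : ℝ)) ^ (2 * l - n) * (-1) ^ n = 1 := by
        rw [← pow_add, show 2 * l - n + n = 2 * l by omega, pow_mul]
        norm_num
      have h2 : ((-1 : ℝ)) ^ n * (-1) ^ n = 1 := by
        rw [← pow_add, ← two_mul, pow_mul]
        norm_num
      calc ((-1 : ℝ)) ^ (2 * l - n) = (-1) ^ (2 * l - n) * ((-1) ^ n * (-1) ^ n) := by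
            rw [h2, mul_one]
        _ = ((-1) ^ (2 * l - n) * (-1) ^ n) * (-1) ^ n := by ring
        _ = (-1) ^ n := by rw [h1, one_mul]
    rw [hck k hk, hcoeff, hsign, hlamk, hvk]
    simp only [one_div, ← hvdef, ← hUdef] at *
    rw [← hPE]
    field_simp
    ring
  -- main computation
  intro p hp
  rw [← Finset.add_sum_erase S _ hmS, ← hTdef]
  match p with
  | 0 =>
    simp only [pow_zero, one_mul]
    rw [hcm, if_neg (by omega)]
    ring
  | (q + 1) =>
    rw [show ((a : ℝ) + (m : ℝ)) = v m from rfl, hvm, zero_pow (Nat.succ_ne_zero q),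
      zero_mul, zero_add]
    have step : ∑ k ∈ T, ((a : ℝ) + (k : ℝ)) ^ (q + 1) * c k =
        (n.factorial : ℝ) * ∑ k ∈ T, v k ^ q * (Lagrange.basis T v k).coeff (n - 1) := by
      rw [Finset.mul_sum]
      refine Finset.sum_congr rfl fun k hk => ?_
      have : ((a : ℝ) + (k : ℝ)) ^ (q + 1) * c k = v k ^ q * (v k * c k) := by
        rw [hvdef]; ring
      rw [this, hkey k hk]
      ring
    rw [step, lag_dual hvinjT q (n - 1) (by omega), coeff_X_pow]
    split_ifs with h1 h2 h2
    · rw [mul_one]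
    · omega
    · omega
    · rw [mul_zero]
end

section
/- (Nonsingularity of the partitioned-block Vandermonde matrix / uniqueness of the MaxPol system.) Let N ≥ 2 and let P, Q ≥ 0 be integers with (P+1) + (Q+1) = N, and let a ∈ ℝ be arbitrary. Then the N × N real matrix M whose first P+1 rows are given by M_{p,k} = (a+k)^p for 0 ≤ p ≤ P and whose last Q+1 rows are given by M_{P+1+q, k} = (−1)^k · (a+k)^q for 0 ≤ q ≤ Q (columns indexed by k = 1,…,N) is invertible. Consequently, for every n ∈ ℕ the system Σ_{k=1}^{N} (a+k)^p c(k) = n!·δ_{p,n} (0 ≤ p ≤ P) together with Σ_{k=1}^{N} (−1)^k (a+k)^q c(k) = 0 (0 ≤ q ≤ Q) has a unique solution c : {1,…,N} → ℝ. -/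
open Finset

section
open Polynomial

lemma maxpol_aux_sum_eval {N : ℕ} (P : ℕ) (c x : Fin N → ℝ)
    (h : ∀ p ≤ P, ∑ k : Fin N, x k ^ p * c k = 0)
    (g : Polynomial ℝ) (hg : g.natDegree ≤ P) :
    ∑ k : Fin N, g.eval (x k) * c k = 0 := by
  have hev : ∀ k : Fin N, g.eval (x k)
      = ∑ j ∈ Finset.range (P + 1), g.coeff j * x k ^ j := fun k =>
    Polynomial.eval_eq_sum_range' (Nat.lt_succ_of_le hg) (x k)
  calc ∑ k : Fin N, g.eval (x k) * c k
      = ∑ k : Fin N, ∑ j ∈ Finset.range (P + 1), g.coeff j * (x k ^ j * c k) := by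
        refine Finset.sum_congr rfl fun k _ => ?_
        rw [hev k, Finset.sum_mul]
        exact Finset.sum_congr rfl fun j _ => by ring
    _ = ∑ j ∈ Finset.range (P + 1), g.coeff j * ∑ k : Fin N, x k ^ j * c k := by
        rw [Finset.sum_comm]
        exact Finset.sum_congr rfl fun j _ => by rw [Finset.mul_sum]
    _ = 0 := by
        refine Finset.sum_eq_zero fun j hj => ?_
        rw [h j (Nat.lt_succ_iff.mp (Finset.mem_range.mp hj)), mul_zero]

/-- the moment sum against descending factorials vanishes -/
lemma maxpol_aux_desc {N P : ℕ} (a : ℝ) (c : Fin N → ℝ)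
    (h : ∀ p ≤ P, ∑ k : Fin N, (a + ((k : ℕ) + 1 : ℕ)) ^ p * c k = 0)
    (m : ℕ) (hm : m ≤ P) :
    ∑ k : Fin N, (((k : ℕ) + 1).descFactorial m : ℝ) * c k = 0 := by
  have hdeg : ((descPochhammer ℝ m).comp (X - C a)).natDegree ≤ P := by
    rw [Polynomial.natDegree_comp, descPochhammer_natDegree, natDegree_X_sub_C, mul_one]
    exact hm
  have := maxpol_aux_sum_eval P c (fun k => a + ((k : ℕ) + 1 : ℕ)) h
    ((descPochhammer ℝ m).comp (X - C a)) hdeg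
  rw [← this]
  refine Finset.sum_congr rfl fun k _ => ?_
  congr 1
  rw [Polynomial.eval_comp, Polynomial.eval_sub, Polynomial.eval_X, Polynomial.eval_C,
    add_sub_cancel_left]
  exact (descPochhammer_eval_eq_descFactorial ℝ _ m).symm

lemma maxpol_kernel {N P Q : ℕ} (hPQ : P + 1 + (Q + 1) = N) (a : ℝ) (c : Fin N → ℝ)
    (h1 : ∀ p ≤ P, ∑ k : Fin N, (a + ((k : ℕ) + 1 : ℕ)) ^ p * c k = 0)
    (h2 : ∀ q ≤ Q, ∑ k : Fin N,
        (-1 : ℝ) ^ ((k : ℕ) + 1) * (a + ((k : ℕ) + 1 : ℕ)) ^ q * c k = 0) :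
    c = 0 := by
  set f : Polynomial ℝ := ∑ k : Fin N, C (c k) * X ^ ((k : ℕ) + 1) with hf_def
  -- evaluation of iterated derivatives
  have heval : ∀ (m : ℕ) (t : ℝ), (derivative^[m] f).eval t
      = ∑ k : Fin N, (((k : ℕ) + 1).descFactorial m : ℝ) * t ^ ((k : ℕ) + 1 - m) * c k := by
    intro m t
    rw [hf_def, Polynomial.iterate_derivative_sum, Polynomial.eval_finset_sum]
    refine Finset.sum_congr rfl fun k _ => ?_
    rw [Polynomial.iterate_derivative_C_mul, Polynomial.iterate_derivative_X_pow_eq_natCast_mul]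
    simp only [Polynomial.eval_mul, Polynomial.eval_C, Polynomial.eval_pow, Polynomial.eval_X,
      Polynomial.eval_natCast]
    ring
  -- roots at 1
  have hroot1 : ∀ m ≤ P, (derivative^[m] f).IsRoot 1 := by
    intro m hm
    have := maxpol_aux_desc a c h1 m hm
    rw [Polynomial.IsRoot, heval m 1, ← this]
    exact Finset.sum_congr rfl fun k _ => by rw [one_pow, mul_one]
  -- roots at -1
  have hroot2 : ∀ m ≤ Q, (derivative^[m] f).IsRoot (-1) := by
    intro m hm
    have h2' : ∀ q ≤ Q, ∑ k : Fin N,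
        (a + ((k : ℕ) + 1 : ℕ)) ^ q * ((-1 : ℝ) ^ ((k : ℕ) + 1) * c k) = 0 := by
      intro q hq
      rw [← h2 q hq]
      exact Finset.sum_congr rfl fun k _ => by ring
    have hsum := maxpol_aux_desc a (fun k => (-1 : ℝ) ^ ((k : ℕ) + 1) * c k) h2' m hm
    rw [Polynomial.IsRoot, heval m (-1)]
    have : ∀ k : Fin N,
        (((k : ℕ) + 1).descFactorial m : ℝ) * (-1 : ℝ) ^ ((k : ℕ) + 1 - m) * c k
        = (-1 : ℝ) ^ m * ((((k : ℕ) + 1).descFactorial m : ℝ)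
            * ((-1 : ℝ) ^ ((k : ℕ) + 1) * c k)) := by
      intro k
      rcases le_or_gt m ((k : ℕ) + 1) with hle | hlt
      · have hpow : (-1 : ℝ) ^ ((k : ℕ) + 1 - m) * (-1 : ℝ) ^ m = (-1 : ℝ) ^ ((k : ℕ) + 1) := by
          rw [← pow_add, Nat.sub_add_cancel hle]
        have hmm : ((-1 : ℝ) ^ m) * ((-1 : ℝ) ^ m) = 1 := by
          rw [← pow_add]; exact Even.neg_one_pow ⟨m, rfl⟩
        calc (((k : ℕ) + 1).descFactorial m : ℝ) * (-1 : ℝ) ^ ((k : ℕ) + 1 - m) * c k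
            = (((k : ℕ) + 1).descFactorial m : ℝ)
                * ((-1 : ℝ) ^ ((k : ℕ) + 1 - m) * ((-1 : ℝ) ^ m * (-1 : ℝ) ^ m)) * c k := by
              rw [hmm]; ring
          _ = _ := by rw [← mul_assoc ((-1 : ℝ) ^ (_ - m)), hpow]; ring
      · rw [Nat.descFactorial_eq_zero_iff_lt.mpr hlt]
        simp
    rw [Finset.sum_congr rfl fun k _ => this k, ← Finset.mul_sum, hsum, mul_zero]
  -- f = 0
  have hf0 : f = 0 := by
    by_contra hf
    have hm1 : P < f.rootMultiplicity 1 :=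
      (Polynomial.lt_rootMultiplicity_iff_isRoot_iterate_derivative hf).2
        (fun m hm => hroot1 m hm)
    have hm2 : Q < f.rootMultiplicity (-1) :=
      (Polynomial.lt_rootMultiplicity_iff_isRoot_iterate_derivative hf).2
        (fun m hm => hroot2 m hm)
    have dvd1 : (X - C (1 : ℝ)) ^ (P + 1) ∣ f :=
      dvd_trans (pow_dvd_pow _ hm1) (Polynomial.pow_rootMultiplicity_dvd f 1)
    have dvd2 : (X - C (-1 : ℝ)) ^ (Q + 1) ∣ f :=
      dvd_trans (pow_dvd_pow _ hm2) (Polynomial.pow_rootMultiplicity_dvd f (-1))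
    have hcop : IsCoprime ((X - C (1 : ℝ)) ^ (P + 1)) ((X - C (-1 : ℝ)) ^ (Q + 1)) := by
      refine IsCoprime.pow ?_
      refine Polynomial.isCoprime_X_sub_C_of_isUnit_sub ?_
      norm_num
    have dvd : (X - C (1 : ℝ)) ^ (P + 1) * (X - C (-1 : ℝ)) ^ (Q + 1) ∣ f :=
      hcop.mul_dvd dvd1 dvd2
    set g : Polynomial ℝ := (X - C (1 : ℝ)) ^ (P + 1) * (X - C (-1 : ℝ)) ^ (Q + 1) with hg_def
    have hgmonic : g.Monic := ((monic_X_sub_C (1 : ℝ)).pow _).mul ((monic_X_sub_C (-1 : ℝ)).pow _)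
    have hgdeg : g.natDegree = N := by
      rw [hg_def, Polynomial.natDegree_mul (pow_ne_zero _ (X_sub_C_ne_zero 1))
        (pow_ne_zero _ (X_sub_C_ne_zero (-1))), Polynomial.natDegree_pow,
        Polynomial.natDegree_pow, natDegree_X_sub_C, natDegree_X_sub_C, mul_one, mul_one]
      exact hPQ
    have hfdeg : f.natDegree ≤ N := by
      refine Polynomial.natDegree_sum_le_of_forall_le _ _ fun k _ => ?_
      refine le_trans (Polynomial.natDegree_mul_le) ?_
      rw [Polynomial.natDegree_C, Polynomial.natDegree_X_pow, zero_add]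
      omega
    obtain ⟨u, hu⟩ := dvd
    have hu0 : u ≠ 0 := by rintro rfl; rw [mul_zero] at hu; exact hf hu
    have hudeg : u.natDegree = 0 := by
      have := Polynomial.natDegree_mul hgmonic.ne_zero hu0
      rw [← hu, hgdeg] at this
      omega
    have hueq : u = C (u.coeff 0) := Polynomial.eq_C_of_natDegree_eq_zero hudeg
    have hfe0 : f.eval 0 = 0 := by
      rw [hf_def, Polynomial.eval_finset_sum]
      refine Finset.sum_eq_zero fun k _ => ?_
      simp
    have hge0 : g.eval 0 ≠ 0 := by
      rw [hg_def]
      simp only [Polynomial.eval_mul, Polynomial.eval_pow, Polynomial.eval_sub,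
        Polynomial.eval_X, Polynomial.eval_C]
      simp only [zero_sub, sub_neg_eq_add, zero_add, one_pow, mul_one]
      exact pow_ne_zero _ (by norm_num)
    have : u.coeff 0 = 0 := by
      have := congrArg (Polynomial.eval 0) hu
      rw [hfe0, Polynomial.eval_mul] at this
      have hu00 : u.eval 0 = 0 := by
        rcases mul_eq_zero.mp this.symm with h | h
        · exact absurd h hge0
        · exact h
      rwa [hueq, Polynomial.eval_C] at hu00
    rw [this, map_zero] at hueq
    exact hu0 hueq
  -- extract coefficients
  funext k
  have : f.coeff ((k : ℕ) + 1) = c k := by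
    rw [hf_def, Polynomial.finset_sum_coeff]
    rw [Finset.sum_eq_single k]
    · simp
    · intro j _ hj
      rw [Polynomial.coeff_C_mul, Polynomial.coeff_X_pow, if_neg, mul_zero]
      intro hjk
      exact hj (Fin.ext (Nat.succ_injective hjk.symm))
    · intro hk; exact absurd (Finset.mem_univ k) hk
  rw [hf0, Polynomial.coeff_zero] at this
  exact this.symm

end

/-- Nonsingularity of the partitioned-block Vandermonde matrix of the MaxPol design,
and unique solvability of the resulting maximally flat algebraic system. -/
theorem maxpol_block_vandermonde_invertible
    (N P Q : ℕ) (hN : 2 ≤ N) (hPQ : (P + 1) + (Q + 1) = N) (a : ℝ)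
    (M : Matrix (Fin N) (Fin N) ℝ)
    (hM : ∀ i k : Fin N, M i k =
      if (i : ℕ) ≤ P then (a + ((k : ℕ) + 1 : ℕ)) ^ (i : ℕ)
      else (-1 : ℝ) ^ ((k : ℕ) + 1) * (a + ((k : ℕ) + 1 : ℕ)) ^ ((i : ℕ) - (P + 1))) :
    IsUnit M ∧
    ∀ n : ℕ, ∃! c : Fin N → ℝ,
      (∀ p : ℕ, p ≤ P →
        ∑ k : Fin N, (a + ((k : ℕ) + 1 : ℕ)) ^ p * c k =
          if p = n then (n.factorial : ℝ) else 0) ∧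
      (∀ q : ℕ, q ≤ Q →
        ∑ k : Fin N, (-1 : ℝ) ^ ((k : ℕ) + 1) * (a + ((k : ℕ) + 1 : ℕ)) ^ q * c k = 0) := by
  -- row computations
  have hrowP : ∀ (c : Fin N → ℝ) (p : ℕ) (hp : p ≤ P) (hpN : p < N),
      M.mulVec c ⟨p, hpN⟩ = ∑ k : Fin N, (a + ((k : ℕ) + 1 : ℕ)) ^ p * c k := by
    intro c p hp hpN
    simp only [Matrix.mulVec, dotProduct]
    refine Finset.sum_congr rfl fun k _ => ?_
    rw [hM ⟨p, hpN⟩ k, if_pos (show ((⟨p, hpN⟩ : Fin N) : ℕ) ≤ P from hp)]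
  have hrowQ : ∀ (c : Fin N → ℝ) (i : Fin N) (hi : ¬ (i : ℕ) ≤ P),
      M.mulVec c i = ∑ k : Fin N,
        (-1 : ℝ) ^ ((k : ℕ) + 1) * (a + ((k : ℕ) + 1 : ℕ)) ^ ((i : ℕ) - (P + 1)) * c k := by
    intro c i hi
    simp only [Matrix.mulVec, dotProduct]
    refine Finset.sum_congr rfl fun k _ => ?_
    rw [hM i k, if_neg hi]
  -- invertibility
  have hdet : IsUnit M.det := by
    rw [isUnit_iff_ne_zero]
    intro hdet0
    obtain ⟨v, hv0, hv⟩ := Matrix.exists_mulVec_eq_zero_iff.mpr hdet0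
    have h1 : ∀ p ≤ P, ∑ k : Fin N, (a + ((k : ℕ) + 1 : ℕ)) ^ p * v k = 0 := by
      intro p hp
      have hpN : p < N := by omega
      rw [← hrowP v p hp hpN, hv]
      rfl
    have h2 : ∀ q ≤ Q, ∑ k : Fin N,
        (-1 : ℝ) ^ ((k : ℕ) + 1) * (a + ((k : ℕ) + 1 : ℕ)) ^ q * v k = 0 := by
      intro q hq
      have hiN : P + 1 + q < N := by omega
      have hi : ¬ ((⟨P + 1 + q, hiN⟩ : Fin N) : ℕ) ≤ P := by simp; omega
      have := hrowQ v ⟨P + 1 + q, hiN⟩ hi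
      rw [hv] at this
      have hq' : ((⟨P + 1 + q, hiN⟩ : Fin N) : ℕ) - (P + 1) = q := by simp
      rw [hq'] at this
      exact this.symm
    exact hv0 (maxpol_kernel hPQ a v h1 h2)
  have hMu : IsUnit M := (Matrix.isUnit_iff_isUnit_det M).mpr hdet
  refine ⟨hMu, fun n => ?_⟩
  set b : Fin N → ℝ := fun i =>
    if (i : ℕ) ≤ P then (if (i : ℕ) = n then (n.factorial : ℝ) else 0) else 0 with hb
  -- the conditions are equivalent to M.mulVec c = b
  have hiff : ∀ c : Fin N → ℝ,
      ((∀ p : ℕ, p ≤ P →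
        ∑ k : Fin N, (a + ((k : ℕ) + 1 : ℕ)) ^ p * c k =
          if p = n then (n.factorial : ℝ) else 0) ∧
      (∀ q : ℕ, q ≤ Q →
        ∑ k : Fin N, (-1 : ℝ) ^ ((k : ℕ) + 1) * (a + ((k : ℕ) + 1 : ℕ)) ^ q * c k = 0))
      ↔ M.mulVec c = b := by
    intro c
    constructor
    · rintro ⟨hc1, hc2⟩
      funext i
      by_cases hi : (i : ℕ) ≤ P
      · have : (⟨(i : ℕ), i.isLt⟩ : Fin N) = i := Fin.ext rfl
        rw [← this, hrowP c (i : ℕ) hi i.isLt, hc1 (i : ℕ) hi, hb]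
        simp only [this, if_pos hi]
      · have hqQ : (i : ℕ) - (P + 1) ≤ Q := by omega
        rw [hrowQ c i hi, hc2 _ hqQ, hb]
        simp only [if_neg hi]
    · intro hc
      constructor
      · intro p hp
        have hpN : p < N := by omega
        rw [← hrowP c p hp hpN, hc, hb]
        simp only [if_pos hp]
      · intro q hq
        have hiN : P + 1 + q < N := by omega
        have hi : ¬ ((⟨P + 1 + q, hiN⟩ : Fin N) : ℕ) ≤ P := by simp; omega
        have h := hrowQ c ⟨P + 1 + q, hiN⟩ hi
        rw [hc] at h
        have hq' : ((⟨P + 1 + q, hiN⟩ : Fin N) : ℕ) - (P + 1) = q := by simp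
        rw [hq'] at h
        rw [← h, hb]
        simp only [if_neg hi]
  -- unique solvability
  refine ⟨M⁻¹.mulVec b, ?_, ?_⟩
  · exact (hiff _).mpr
      (by rw [Matrix.mulVec_mulVec, Matrix.mul_nonsing_inv M hdet, Matrix.one_mulVec])
  · intro c hc
    have hc' := (hiff c).mp hc
    have : M⁻¹.mulVec (M.mulVec c) = M⁻¹.mulVec b := by rw [hc']
    rwa [Matrix.mulVec_mulVec, Matrix.nonsing_inv_mul M hdet, Matrix.one_mulVec] at this
end

section
/- (Inverse of a Vandermonde matrix via elementary symmetric polynomials.) Let x₁, …, x_N be pairwise distinct elements of a field, and let V be the N × N matrix with entries V_{p,k} = x_k^{p−1} (rows p = 1,…,N, columns k = 1,…,N). Then V is invertible and its inverse has entries (V^{−1})_{k,p} = (−1)^{N−p} · e_{N−p}({x_j : j ≠ k}) / ∏_{j≠k} (x_k − x_j). -/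
/-!
Row `k` of the claimed inverse lists the coefficients of the Lagrange basis polynomial
`ℓ_k(y) = ∏_{j≠k} (y - x_j) / ∏_{j≠k} (x_k - x_j)`: by Vieta, the coefficient of `y^p` in
`∏_{j≠k} (y - x_j)` is `(-1)^(N-1-p) e_{N-1-p}({x_j : j ≠ k})`. Multiplying this row by
column `k'` of `V` evaluates `ℓ_k` at `x_{k'}`, which gives `δ_{k k'}`; so the matrix is a
left inverse of `V`.
-/

open Finset Matrix Polynomial

theorem Multiset.sum_esymm_mul_pow_eq_prod_sub {R : Type*} [CommRing R] (s : Multiset R)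
    {n : ℕ} (hs : Multiset.card s + 1 = n) (y : R) :
    ∑ p : Fin n, (-1 : R) ^ (n - ((p : ℕ) + 1)) * s.esymm (n - ((p : ℕ) + 1)) * y ^ (p : ℕ) =
      (s.map (y - ·)).prod := by
  nontriviality R
  set P : R[X] := (s.map fun t => X - C t).prod
  have hdeg : P.natDegree < n := by
    rw [natDegree_multiset_prod_X_sub_C_eq_card]
    omega
  have heval : P.eval y = (s.map (y - ·)).prod := by
    simp only [P, eval_multiset_prod, Multiset.map_map, Function.comp_def, eval_sub, eval_X,
      eval_C]
  rw [← heval, eval_eq_sum_range' hdeg, ← Fin.sum_univ_eq_sum_range]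
  refine Finset.sum_congr rfl fun p _ => ?_
  rw [Multiset.prod_X_sub_C_coeff s (by omega)]
  congr 3 <;> omega

section Nodes

variable {ι F : Type*} [Fintype ι] [DecidableEq ι] [Field F] {x : ι → F}

theorem Function.Injective.prod_erase_sub_ne_zero (hx : Function.Injective x) (k : ι) :
    ∏ j ∈ univ.erase k, (x k - x j) ≠ 0 :=
  prod_ne_zero_iff.2 fun _ hj => sub_ne_zero.2 fun h => (mem_erase.1 hj).1 (hx h).symm

theorem Function.Injective.prod_erase_sub_div_prod_erase_sub (hx : Function.Injective x)
    (k k' : ι) :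
    (∏ j ∈ univ.erase k, (x k' - x j)) / ∏ j ∈ univ.erase k, (x k - x j) =
      (1 : Matrix ι ι F) k k' := by
  rcases eq_or_ne k k' with rfl | hkk'
  · rw [one_apply_eq, div_self (hx.prod_erase_sub_ne_zero k)]
  · rw [one_apply_ne hkk', prod_eq_zero (mem_erase.2 ⟨hkk'.symm, mem_univ k'⟩) (sub_self _),
      zero_div]

end Nodes

theorem inverse_vandermonde_esymm_general
    {F : Type*} [Field F] (N : ℕ) (x : Fin N → F)
    (hx : Function.Injective x)
    (V : Matrix (Fin N) (Fin N) F) (hV : ∀ p k, V p k = x k ^ (p : ℕ)) :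
    IsUnit V.det ∧
    ∀ k p : Fin N, V⁻¹ k p =
      (-1 : F) ^ (N - ((p : ℕ) + 1)) *
        (((Finset.univ.erase k).val.map x).esymm (N - ((p : ℕ) + 1))) /
        ∏ j ∈ Finset.univ.erase k, (x k - x j) := by
  set W : Matrix (Fin N) (Fin N) F := of fun k p =>
    (-1 : F) ^ (N - ((p : ℕ) + 1)) *
      (((univ.erase k).val.map x).esymm (N - ((p : ℕ) + 1))) / ∏ j ∈ univ.erase k, (x k - x j)
  have hWV : W * V = 1 := by
    ext k k'
    have hcard : Multiset.card ((univ.erase k).val.map x) + 1 = N := by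
      simp [Nat.sub_add_cancel (Fin.pos k)]
    calc (W * V) k k'
        = (∑ p : Fin N, (-1 : F) ^ (N - ((p : ℕ) + 1)) *
            ((univ.erase k).val.map x).esymm (N - ((p : ℕ) + 1)) * x k' ^ (p : ℕ)) /
            ∏ j ∈ univ.erase k, (x k - x j) := by
          simp only [mul_apply, hV, W, of_apply, sum_div, div_mul_eq_mul_div]
      _ = (∏ j ∈ univ.erase k, (x k' - x j)) / ∏ j ∈ univ.erase k, (x k - x j) := by
          rw [Multiset.sum_esymm_mul_pow_eq_prod_sub _ hcard, Multiset.map_map, prod_map_val]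
          rfl
      _ = (1 : Matrix (Fin N) (Fin N) F) k k' := hx.prod_erase_sub_div_prod_erase_sub k k'
  exact ⟨isUnit_det_of_left_inverse hWV, fun k p => by rw [inv_eq_left_inv hWV]; rfl⟩

/-- Inverse of a Vandermonde matrix via elementary symmetric polynomials:
for distinct nodes `x₁,…,x_N`, `(V⁻¹)_{k,p} = (−1)^{N−p} e_{N−p}({x_j : j≠k}) /
∏_{j≠k}(x_k − x_j)`  (rows `p` of `V` list the `(p−1)`-th powers of the nodes). -/
theorem inverse_vandermonde_esymm
    {F : Type*} [Field F] (N : ℕ) (hN : 1 ≤ N) (x : Fin N → F)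
    (hx : Function.Injective x)
    (V : Matrix (Fin N) (Fin N) F) (hV : ∀ p k, V p k = x k ^ (p : ℕ)) :
    IsUnit V.det ∧
    ∀ k p : Fin N, V⁻¹ k p =
      (-1 : F) ^ (N - ((p : ℕ) + 1)) *
        (((Finset.univ.erase k).val.map x).esymm (N - ((p : ℕ) + 1))) /
        ∏ j ∈ Finset.univ.erase k, (x k - x j) :=
  inverse_vandermonde_esymm_general N x hx V hV
end

section
/- (W·X factorization of the inverse Vandermonde on consecutive nodes.) Let N ≥ 1, v ∈ ℝ, and let V be the N × N matrix with entries V_{p,k} = (v+k)^{p−1} (rows p = 1,…,N, columns k = 1,…,N). Define the N × N matrices W and X by W_{k,m} = (v+k)^{N−m} / λ(k) for 1 ≤ k, m ≤ N, where λ(k) = ∏_{j=1, j≠k}^{N}(k−j), and X lower triangular Toeplitz with X_{i,j} = (−1)^{i−j} · e_{i−j}({v+1, v+2, …, v+N}) for i ≥ j and X_{i,j} = 0 for i < j. Then V is invertible and V^{−1} = W·X. -/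
/-!
Row `k` of `W * X` is the coefficient vector of the Lagrange basis polynomial
`ℓ_k = ∏_{j ≠ k} (z - x_j) / λ(k)` for the nodes `x_j = v + j`: the Toeplitz matrix `X` holds the
coefficients of `∏_j (z - x_j)`, and pairing them with the powers `x_k ^ (N - 1 - m)` is synthetic
division by `z - x_k`. Hence `(W * X * V) k k' = ℓ_k (x_k') = δ_{k k'}`.
-/

open Finset Matrix Polynomial

namespace Polynomial

variable {R : Type*} [CommRing R]

theorem coeff_multiset_prod_X_sub_C_divByMonic_X_sub_C (s : Multiset R) (a : R) (p : ℕ) :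
    ((s.map fun t => X - C t).prod /ₘ (X - C a)).coeff p =
      ∑ j ∈ range (s.card - p), a ^ (s.card - p - 1 - j) * ((-1) ^ j * s.esymm j) := by
  nontriviality R
  rw [coeff_divByMonic_X_sub_C, natDegree_multiset_prod_X_sub_C_eq_card,
    ← Ico_add_one_right_eq_Icc, sum_Ico_eq_sum_range, ← sum_range_reflect]
  refine sum_congr (by congr 1; omega) fun j hj => ?_
  rw [mem_range] at hj
  rw [show p + 1 + (s.card + 1 - (p + 1) - 1 - j) = s.card - j by omega,
    Multiset.prod_X_sub_C_coeff s (Nat.sub_le _ _), Nat.sub_sub_self (by omega)]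
  congr 2
  omega

end Polynomial

namespace Lagrange

variable {F : Type*} [Field F] {ι : Type*} [DecidableEq ι] {s : Finset ι} {v : ι → F}

theorem coeff_basis {i : ι} (hi : i ∈ s) (p : ℕ) :
    (Lagrange.basis s v i).coeff p = nodalWeight s v i *
      ∑ j ∈ range (#s - p), v i ^ (#s - p - 1 - j) * ((-1) ^ j * (s.val.map v).esymm j) := by
  have hnodal : nodal s v = ((s.val.map v).map fun t => X - C t).prod := by
    rw [Multiset.map_map]
    rfl
  rw [basis_eq_prod_sub_inv_mul_nodal_div hi, coeff_C_mul, hnodal,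
    ← divByMonic_eq_div _ (monic_X_sub_C _), coeff_multiset_prod_X_sub_C_divByMonic_X_sub_C,
    Multiset.card_map, card_val]

theorem basis_coeff_mul_vandermonde_transpose {n : ℕ} {e : Fin n → ι} (hvs : Set.InjOn v s)
    (he : Function.Injective e) (hes : ∀ k, e k ∈ s) (hcard : #s ≤ n) :
    (of fun k p : Fin n => (Lagrange.basis s v (e k)).coeff p) * (vandermonde (v ∘ e))ᵀ = 1 := by
  ext k k'
  have hdeg : (Lagrange.basis s v (e k)).natDegree < n := by
    rw [natDegree_basis hvs (hes k)]
    have := k.isLt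
    omega
  calc ∑ p : Fin n, (Lagrange.basis s v (e k)).coeff p * v (e k') ^ (p : ℕ)
      = (Lagrange.basis s v (e k)).eval (v (e k')) := by
        rw [eval_eq_sum_range' hdeg, Fin.sum_univ_eq_sum_range (fun p => _ * v (e k') ^ p)]
    _ = (1 : Matrix (Fin n) (Fin n) F) k k' := by
        obtain rfl | hkk' := eq_or_ne k k'
        · rw [eval_basis_self hvs (hes k), one_apply_eq]
        · rw [eval_basis_of_ne (he.ne hkk') (hes k'), one_apply_ne hkk']

end Lagrange

theorem Fin.sum_pow_mul_ite_le {R : Type*} [CommSemiring R] (a : R) (c : ℕ → R) (n p : ℕ) :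
    ∑ m : Fin n, a ^ (n - (m + 1)) * (if p ≤ (m : ℕ) then c (m - p) else 0) =
      ∑ j ∈ range (n - p), a ^ (n - p - 1 - j) * c j := by
  rw [Fin.sum_univ_eq_sum_range (fun m => a ^ (n - (m + 1)) * if p ≤ m then c (m - p) else 0)]
  simp_rw [mul_ite, mul_zero]
  rw [← sum_filter, show (range n).filter (p ≤ ·) = Ico p n by ext; simp only [mem_filter, mem_range, mem_Ico]; omega,
    sum_Ico_eq_sum_range]
  refine sum_congr rfl fun j _ => ?_
  rw [Nat.add_sub_cancel_left]
  congr 2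
  omega

theorem inverse_vandermonde_WX_factorization_general
    (N : ℕ) (v : ℝ)
    (lam : ℕ → ℝ)
    (hlam : ∀ k, lam k = ∏ j ∈ (Finset.Icc 1 N).erase k, ((k : ℝ) - (j : ℝ)))
    (V W X : Matrix (Fin N) (Fin N) ℝ)
    (hV : ∀ p k : Fin N, V p k = (v + ((k : ℕ) + 1 : ℕ)) ^ (p : ℕ))
    (hW : ∀ k m : Fin N, W k m = (v + ((k : ℕ) + 1 : ℕ)) ^ (N - ((m : ℕ) + 1)) /
      lam ((k : ℕ) + 1))
    (hX : ∀ i j : Fin N, X i j =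
      if (j : ℕ) ≤ (i : ℕ) then
        (-1 : ℝ) ^ ((i : ℕ) - (j : ℕ)) *
          (((Finset.Icc 1 N).val.map (fun r : ℕ => v + (r : ℝ))).esymm ((i : ℕ) - (j : ℕ)))
      else 0) :
    IsUnit V.det ∧ V⁻¹ = W * X := by
  set node : ℕ → ℝ := fun r => v + r
  have hnode : Set.InjOn node (Icc 1 N) := fun a _ b _ h => by simpa [node] using h
  have hmem : ∀ k : Fin N, (k : ℕ) + 1 ∈ Icc 1 N := fun k => mem_Icc.2 ⟨by omega, k.isLt⟩
  have hweight : ∀ k : ℕ, Lagrange.nodalWeight (Icc 1 N) node k = (lam k)⁻¹ := by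
    intro k
    rw [Lagrange.nodalWeight, prod_inv_distrib, hlam]
    congr 1
    exact prod_congr rfl fun j _ => by ring
  have hWX : W * X = of fun k p : Fin N => (Lagrange.basis (Icc 1 N) node (k + 1)).coeff p := by
    ext k p
    rw [of_apply, Lagrange.coeff_basis (hmem k), Nat.card_Icc, Nat.add_sub_cancel, hweight,
      ← Fin.sum_pow_mul_ite_le, mul_apply, mul_sum]
    exact sum_congr rfl fun m _ => by rw [hW, hX]; ring
  have hleft : W * X * V = 1 := by
    rw [hWX, show V = (vandermonde (node ∘ fun k : Fin N => (k : ℕ) + 1))ᵀ by ext; exact hV _ _]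
    exact Lagrange.basis_coeff_mul_vandermonde_transpose hnode
      (fun a b h => Fin.ext (Nat.succ_injective h)) hmem (by simp)
  exact ⟨isUnit_det_of_left_inverse hleft, inv_eq_left_inv hleft⟩

/-- `W·X` factorization of the inverse Vandermonde matrix on the consecutive
unit-spaced nodes `v+1,…,v+N`: `V⁻¹ = W·X` with `W_{k,m} = (v+k)^{N−m}/λ(k)` and
`X` the lower-triangular Toeplitz (Stanley) matrix of signed elementary symmetric
polynomials of the nodes. -/
theorem inverse_vandermonde_WX_factorization
    (N : ℕ) (hN : 1 ≤ N) (v : ℝ)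
    (lam : ℕ → ℝ)
    (hlam : ∀ k, lam k = ∏ j ∈ (Finset.Icc 1 N).erase k, ((k : ℝ) - (j : ℝ)))
    (V W X : Matrix (Fin N) (Fin N) ℝ)
    (hV : ∀ p k : Fin N, V p k = (v + ((k : ℕ) + 1 : ℕ)) ^ (p : ℕ))
    (hW : ∀ k m : Fin N, W k m = (v + ((k : ℕ) + 1 : ℕ)) ^ (N - ((m : ℕ) + 1)) /
      lam ((k : ℕ) + 1))
    (hX : ∀ i j : Fin N, X i j =
      if (j : ℕ) ≤ (i : ℕ) then
        (-1 : ℝ) ^ ((i : ℕ) - (j : ℕ)) *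
          (((Finset.Icc 1 N).val.map (fun r : ℕ => v + (r : ℝ))).esymm ((i : ℕ) - (j : ℕ)))
      else 0) :
    IsUnit V.det ∧ V⁻¹ = W * X :=
  inverse_vandermonde_WX_factorization_general N v lam hlam V W X hV hW hX
end
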